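/- Let (Ω, 𝔉, μ) be a finite measure space and let γ : ℝ^d → [0, ∞) be a nonnegative, convex function, Lipschitz continuous with constant L ≥ 0, with mollifications γ_ε. Let (εₙ)ₙ ⊂ [0, ∞) with εₙ → 0, let Wₙ → W strongly in L²(μ; ℝ^d), and let (ξₙ)ₙ ⊂ L²(μ; ℝ^d) converge weakly to ξ in L²(μ; ℝ^d) (i.e. ⟪ξₙ, Z⟫ → ⟪ξ, Z⟫ for all Z), where for each n and μ-almost every x ∈ Ω, ξₙ(x) ∈ ∂γ_{εₙ}(Wₙ(x)), i.e. ⟨ξₙ(x), z − Wₙ(x)⟩ ≤ γ_{εₙ}(z) − γ_{εₙ}(Wₙ(x)) for all z ∈ ℝ^d. Then ξ(x) ∈ ∂γ(W(x)) for μ-almost every x ∈ Ω, and moreover ∫_Ω γ_{εₙ}(Wₙ(x)) dμ(x) → ∫_Ω γ(W(x)) dμ(x) as n → ∞. -/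

import Mathlib

/-!
Averaging `γ` against the probability density `ρ_ε`, which lives on the ball of radius `ε`,
keeps its Lipschitz constant `L` and moves its values by at most `L ε`. A subgradient of an
`L`-Lipschitz function has norm at most `L`, so `‖ξₙ‖ ≤ L` a.e. For fixed `z` and measurable
`s`, integrate the subgradient inequality over `s`. On the left, `⟪ξₙ, z - Wₙ⟫` is within
`L ‖Wₙ - W‖` of `⟪ξₙ, z - W⟫`, whose integral over `s` is `⟪ξₙ, 1_s (z - W)⟫` and converges by
weak convergence; on the right, `γ_{εₙ}(z) - γ_{εₙ}(Wₙ)` converges in `L¹` to `γ(z) - γ(W)`.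
Since `s` is arbitrary, `⟪ξ, z - W⟫ ≤ γ(z) - γ(W)` a.e. for each `z`, and continuity in `z`
together with a countable dense set of `z` gives it a.e. for all `z` at once. The same `L¹`
estimate gives the convergence of `∫ γ_{εₙ}(Wₙ)`.
-/

open Filter MeasureTheory

/-- The mollification `γ_ε := ρ_ε * γ`, with `γ_0 := γ`, where
`ρ_ε(x) = ε^{-d} ρ(x/ε)`. -/
noncomputable def mollify {d : ℕ} (ρ γ : EuclideanSpace ℝ (Fin d) → ℝ) (ε : ℝ)
    (x : EuclideanSpace ℝ (Fin d)) : ℝ :=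
  if ε = 0 then γ x else ∫ y, (ε ^ d)⁻¹ * ρ (ε⁻¹ • y) * γ (x - y)

open scoped NNReal RealInnerProductSpace Topology

section Density

variable {α : Type*} [MeasurableSpace α] {ν : Measure α} {k f : α → ℝ} {c : ℝ}

lemma MeasureTheory.Integrable.mul_of_abs_le_on_support (hk : Integrable k ν)
    (hf : AEStronglyMeasurable f ν) (hfc : ∀ y, k y ≠ 0 → |f y| ≤ c) :
    Integrable (fun y => k y * f y) ν := by
  refine (hk.norm.mul_const c).mono' (hk.aestronglyMeasurable.mul hf) (ae_of_all _ fun y => ?_)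
  rcases eq_or_ne (k y) 0 with hy | hy
  · simp [hy]
  · rw [norm_mul, Real.norm_eq_abs (f y)]
    exact mul_le_mul_of_nonneg_left (hfc y hy) (norm_nonneg _)

lemma abs_integral_mul_le_of_abs_le_on_support (hk_nonneg : ∀ y, 0 ≤ k y)
    (hk_one : ∫ y, k y ∂ν = 1) (hfc : ∀ y, k y ≠ 0 → |f y| ≤ c) :
    |∫ y, k y * f y ∂ν| ≤ c := by
  have hk := integrable_of_integral_eq_one hk_one
  calc |∫ y, k y * f y ∂ν| ≤ ∫ y, k y * c ∂ν := by
        rw [← Real.norm_eq_abs]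
        refine norm_integral_le_of_norm_le (hk.mul_const c) (ae_of_all _ fun y => ?_)
        rcases eq_or_ne (k y) 0 with hy | hy
        · simp [hy]
        · rw [norm_mul, Real.norm_of_nonneg (hk_nonneg y), Real.norm_eq_abs]
          exact mul_le_mul_of_nonneg_left (hfc y hy) (hk_nonneg y)
    _ = c := by rw [integral_mul_const, hk_one, one_mul]

end Density

section Mollifier

variable {d : ℕ} {ρ γ : EuclideanSpace ℝ (Fin d) → ℝ} {ε : ℝ}

noncomputable def scaledMollifier (ρ : EuclideanSpace ℝ (Fin d) → ℝ) (ε : ℝ)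
    (y : EuclideanSpace ℝ (Fin d)) : ℝ :=
  (ε ^ d)⁻¹ * ρ (ε⁻¹ • y)

lemma mollify_of_ne_zero (hε : ε ≠ 0) (x : EuclideanSpace ℝ (Fin d)) :
    mollify ρ γ ε x = ∫ y, scaledMollifier ρ ε y * γ (x - y) :=
  if_neg hε

lemma mollify_zero : mollify ρ γ 0 = γ :=
  funext fun _ => if_pos rfl

lemma scaledMollifier_nonneg (hρ : ∀ x, 0 ≤ ρ x) (hε : 0 ≤ ε) (y : EuclideanSpace ℝ (Fin d)) :
    0 ≤ scaledMollifier ρ ε y :=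
  mul_nonneg (inv_nonneg.2 (pow_nonneg hε _)) (hρ _)

lemma integral_scaledMollifier (hε : 0 < ε) :
    ∫ y, scaledMollifier ρ ε y = ∫ y, ρ y := by
  simp_rw [scaledMollifier]
  rw [integral_const_mul, Measure.integral_comp_inv_smul_of_nonneg volume ρ hε.le,
    finrank_euclideanSpace_fin, smul_eq_mul, ← mul_assoc, inv_mul_cancel₀ (by positivity),
    one_mul]

lemma MeasureTheory.Integrable.scaledMollifier (hρ : Integrable ρ) (hε : ε ≠ 0) :
    Integrable (scaledMollifier ρ ε) :=
  (hρ.comp_smul (inv_ne_zero hε)).const_mul _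

lemma norm_le_of_scaledMollifier_ne_zero (hρ : Function.support ρ ⊆ Metric.closedBall 0 1)
    (hε : 0 < ε) {y : EuclideanSpace ℝ (Fin d)} (hy : scaledMollifier ρ ε y ≠ 0) :
    ‖y‖ ≤ ε := by
  have hy' := hρ (right_ne_zero_of_mul hy)
  rwa [mem_closedBall_zero_iff, norm_smul, norm_inv, Real.norm_of_nonneg hε.le,
    inv_mul_le_iff₀ hε, mul_one] at hy'

variable {K : ℝ≥0}

lemma integrable_scaledMollifier_mul_comp_sub (hρ_int : ∫ x, ρ x = 1)
    (hρ_supp : Function.support ρ ⊆ Metric.closedBall 0 1) (hγ : LipschitzWith K γ)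
    (hε : 0 < ε) (x : EuclideanSpace ℝ (Fin d)) :
    Integrable (fun y => scaledMollifier ρ ε y * γ (x - y)) := by
  refine ((integrable_of_integral_eq_one hρ_int).scaledMollifier hε.ne').mul_of_abs_le_on_support
    (c := |γ x| + K * ε) (hγ.continuous.comp (continuous_sub_left x)).aestronglyMeasurable
    fun y hy => ?_
  have hlip := hγ.dist_le_mul (x - y) x
  rw [Real.dist_eq, dist_eq_norm, sub_sub_cancel_left, norm_neg] at hlip
  have hyε := norm_le_of_scaledMollifier_ne_zero hρ_supp hε hy
  calc |γ (x - y)| ≤ |γ x| + |γ (x - y) - γ x| := by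
        linarith [abs_sub_abs_le_abs_sub (γ (x - y)) (γ x)]
    _ ≤ |γ x| + K * ε := by gcongr; exact hlip.trans (by gcongr)

lemma LipschitzWith.mollify (hρ_nonneg : ∀ x, 0 ≤ ρ x) (hρ_int : ∫ x, ρ x = 1)
    (hρ_supp : Function.support ρ ⊆ Metric.closedBall 0 1) (hγ : LipschitzWith K γ)
    (hε : 0 ≤ ε) : LipschitzWith K (mollify ρ γ ε) := by
  rcases hε.eq_or_lt with rfl | hε
  · rwa [mollify_zero]
  refine LipschitzWith.of_dist_le_mul fun z w => ?_
  rw [Real.dist_eq, mollify_of_ne_zero hε.ne', mollify_of_ne_zero hε.ne', ← integral_sub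
    (integrable_scaledMollifier_mul_comp_sub hρ_int hρ_supp hγ hε z)
    (integrable_scaledMollifier_mul_comp_sub hρ_int hρ_supp hγ hε w)]
  simp_rw [← mul_sub]
  refine abs_integral_mul_le_of_abs_le_on_support (scaledMollifier_nonneg hρ_nonneg hε.le)
    (by rw [integral_scaledMollifier hε, hρ_int]) fun y _ => ?_
  simpa [Real.dist_eq, dist_sub_right] using hγ.dist_le_mul (z - y) (w - y)

lemma abs_mollify_sub_le (hρ_nonneg : ∀ x, 0 ≤ ρ x) (hρ_int : ∫ x, ρ x = 1)
    (hρ_supp : Function.support ρ ⊆ Metric.closedBall 0 1) (hγ : LipschitzWith K γ)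
    (hε : 0 ≤ ε) (x : EuclideanSpace ℝ (Fin d)) : |mollify ρ γ ε x - γ x| ≤ K * ε := by
  rcases hε.eq_or_lt with rfl | hε
  · simp [mollify_zero]
  have hk_one : ∫ y, scaledMollifier ρ ε y = 1 := by rw [integral_scaledMollifier hε, hρ_int]
  have hk := integrable_of_integral_eq_one hk_one
  have h : mollify ρ γ ε x - γ x = ∫ y, scaledMollifier ρ ε y * (γ (x - y) - γ x) := by
    simp_rw [mul_sub]
    rw [integral_sub (integrable_scaledMollifier_mul_comp_sub hρ_int hρ_supp hγ hε x)
      (hk.mul_const _), integral_mul_const, hk_one, one_mul, mollify_of_ne_zero hε.ne']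
  rw [h]
  refine abs_integral_mul_le_of_abs_le_on_support (scaledMollifier_nonneg hρ_nonneg hε.le) hk_one
    fun y hy => ?_
  calc |γ (x - y) - γ x| ≤ K * ‖y‖ := by
        simpa [Real.dist_eq, dist_eq_norm] using hγ.dist_le_mul (x - y) x
    _ ≤ K * ε := by gcongr; exact norm_le_of_scaledMollifier_ne_zero hρ_supp hε hy

end Mollifier

section Convergence

variable {Ω E : Type*} [MeasurableSpace Ω] {μ : Measure Ω} [NormedAddCommGroup E]

lemma tendsto_setIntegral_of_norm_sub_le {G : Type*} [NormedAddCommGroup G] [NormedSpace ℝ G]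
    {ι : Type*} {l : Filter ι} {F F' : ι → Ω → G} {b : ι → Ω → ℝ} {a : G} {s : Set Ω}
    (hF : ∀ i, Integrable (F i) μ) (hF' : ∀ i, Integrable (F' i) μ)
    (hb : ∀ i, Integrable (b i) μ) (hFb : ∀ i, ∀ᵐ x ∂μ, ‖F i x - F' i x‖ ≤ b i x)
    (hb0 : Tendsto (fun i => ∫ x, b i x ∂μ) l (𝓝 0))
    (hlim : Tendsto (fun i => ∫ x in s, F' i x ∂μ) l (𝓝 a)) :
    Tendsto (fun i => ∫ x in s, F i x ∂μ) l (𝓝 a) := by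
  have hdiff : Tendsto (fun i => ∫ x in s, F i x ∂μ - ∫ x in s, F' i x ∂μ) l (𝓝 0) := by
    refine squeeze_zero_norm (fun i => ?_) hb0
    rw [← integral_sub (hF i).integrableOn (hF' i).integrableOn]
    calc ‖∫ x in s, (F i x - F' i x) ∂μ‖ ≤ ∫ x in s, ‖F i x - F' i x‖ ∂μ :=
          norm_integral_le_integral_norm _
      _ ≤ ∫ x, ‖F i x - F' i x‖ ∂μ :=
          setIntegral_le_integral ((hF i).sub (hF' i)).norm (ae_of_all _ fun x => norm_nonneg _)
      _ ≤ ∫ x, b i x ∂μ := integral_mono_ae ((hF i).sub (hF' i)).norm (hb i) (hFb i)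
  simpa using hdiff.add hlim

lemma integral_norm_le_sqrt_mul_sqrt [IsFiniteMeasure μ] {f : Ω → E} (hf : MemLp f 2 μ) :
    ∫ x, ‖f x‖ ∂μ ≤ √(∫ x, ‖f x‖ ^ 2 ∂μ) * √(μ.real Set.univ) := by
  have h := integral_mul_le_Lp_mul_Lq_of_nonneg Real.HolderConjugate.two_two
    (Eventually.of_forall fun x => norm_nonneg (f x))
    (Eventually.of_forall fun _ => zero_le_one)
    (by rw [ENNReal.ofReal_ofNat]; exact hf.norm)
    (by rw [ENNReal.ofReal_ofNat]; exact memLp_const 1)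
  simpa [Real.sqrt_eq_rpow, integral_const] using h

lemma tendsto_integral_norm_of_tendsto_integral_norm_sq [IsFiniteMeasure μ] {ι : Type*}
    {l : Filter ι} {F : ι → Ω → E} (hF : ∀ i, MemLp (F i) 2 μ)
    (h : Tendsto (fun i => ∫ x, ‖F i x‖ ^ 2 ∂μ) l (𝓝 0)) :
    Tendsto (fun i => ∫ x, ‖F i x‖ ∂μ) l (𝓝 0) := by
  refine squeeze_zero (fun i => integral_nonneg fun x => norm_nonneg _)
    (fun i => integral_norm_le_sqrt_mul_sqrt (hF i)) ?_
  simpa using (h.sqrt).mul_const √(μ.real Set.univ)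

lemma LipschitzWith.integrable_comp [IsFiniteMeasure μ] {g : E → ℝ} {K : ℝ≥0}
    (hg : LipschitzWith K g) {V : Ω → E} (hV : Integrable V μ) :
    Integrable (fun x => g (V x)) μ := by
  refine ((integrable_const ‖g 0‖).add (hV.norm.const_mul K)).mono'
    (hg.continuous.comp_aestronglyMeasurable hV.aestronglyMeasurable) (ae_of_all _ fun x => ?_)
  have hlip := hg.dist_le_mul (V x) 0
  rw [dist_eq_norm, dist_eq_norm, sub_zero] at hlip
  show ‖g (V x)‖ ≤ ‖g 0‖ + K * ‖V x‖
  linarith [norm_le_insert' (g (V x)) (g 0)]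

lemma tendsto_setIntegral_comp_of_lipschitzWith [IsFiniteMeasure μ] {K : ℝ≥0}
    {W : Ω → E} {Wseq : ℕ → Ω → E} {g : ℕ → E → ℝ} {g₀ : E → ℝ} {η : ℕ → ℝ}
    (hg : ∀ n, LipschitzWith K (g n)) (hg₀ : LipschitzWith K g₀)
    (hη : ∀ n w, |g n w - g₀ w| ≤ η n) (hη0 : Tendsto η atTop (𝓝 0))
    (hW : Integrable W μ) (hWseq : ∀ n, Integrable (Wseq n) μ)
    (hW_L1 : Tendsto (fun n => ∫ x, ‖Wseq n x - W x‖ ∂μ) atTop (𝓝 0)) (s : Set Ω) :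
    Tendsto (fun n => ∫ x in s, g n (Wseq n x) ∂μ) atTop (𝓝 (∫ x in s, g₀ (W x) ∂μ)) := by
  have hdist : ∀ n, Integrable (fun x => ‖Wseq n x - W x‖) μ := fun n =>
    ((hWseq n).sub hW).norm
  have hb : ∀ n, Integrable (fun x => K * ‖Wseq n x - W x‖ + η n) μ := fun n =>
    ((hdist n).const_mul _).add (integrable_const _)
  refine tendsto_setIntegral_of_norm_sub_le (fun n => (hg n).integrable_comp (hWseq n))
    (fun _ => hg₀.integrable_comp hW) hb (fun n => ae_of_all _ fun x => ?_) ?_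
    tendsto_const_nhds
  · calc ‖g n (Wseq n x) - g₀ (W x)‖
        ≤ |g n (Wseq n x) - g n (W x)| + |g n (W x) - g₀ (W x)| := abs_sub_le ..
      _ ≤ K * ‖Wseq n x - W x‖ + η n := by
          gcongr
          · simpa [Real.dist_eq, dist_eq_norm] using (hg n).dist_le_mul (Wseq n x) (W x)
          · exact hη n (W x)
  · have h := (hW_L1.const_mul (K : ℝ)).add (hη0.mul_const (μ.real Set.univ))
    simp only [zero_mul, mul_zero, add_zero] at h
    refine h.congr fun n => ?_
    rw [integral_add ((hdist n).const_mul _) (integrable_const _), integral_const,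
      integral_const_mul, smul_eq_mul, mul_comm (μ.real _)]

lemma ae_forall_le_of_forall_ae_le {X : Type*} [TopologicalSpace X]
    [TopologicalSpace.SeparableSpace X] {f h : Ω → X → ℝ} (hf : ∀ x, Continuous (f x))
    (hh : ∀ x, Continuous (h x)) (hfh : ∀ z, ∀ᵐ x ∂μ, f x z ≤ h x z) :
    ∀ᵐ x ∂μ, ∀ z, f x z ≤ h x z := by
  obtain ⟨D, hD_countable, hD_dense⟩ := TopologicalSpace.exists_countable_dense X
  filter_upwards [(ae_ball_iff hD_countable).mpr fun z _ => hfh z] with x hx z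
  exact le_on_closure hx (hf x).continuousOn (hh x).continuousOn (hD_dense.closure_eq ▸ trivial)

end Convergence

section Subdifferential

variable {Ω E : Type*} [MeasurableSpace Ω] {μ : Measure Ω}
  [NormedAddCommGroup E] [InnerProductSpace ℝ E]

def subdifferential (g : E → ℝ) (w : E) : Set E :=
  {ξ | ∀ z, ⟪ξ, z - w⟫ ≤ g z - g w}

lemma norm_le_of_mem_subdifferential {g : E → ℝ} {K : ℝ≥0} (hg : LipschitzWith K g)
    {w ξ : E} (hξ : ξ ∈ subdifferential g w) : ‖ξ‖ ≤ K := by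
  have h := hξ (w + ξ)
  rw [add_sub_cancel_left, real_inner_self_eq_norm_sq] at h
  have hK : g (w + ξ) - g w ≤ K * ‖ξ‖ := by
    simpa [Real.dist_eq, dist_eq_norm] using (le_abs_self _).trans (hg.dist_le_mul (w + ξ) w)
  nlinarith [norm_nonneg ξ]

lemma MeasureTheory.MemLp.integrable_inner {f g : Ω → E} (hf : MemLp f 2 μ)
    (hg : MemLp g 2 μ) : Integrable (fun x => ⟪f x, g x⟫) μ :=
  (L2.integrable_inner (𝕜 := ℝ) (hf.toLp f) (hg.toLp g)).congr <| by
    filter_upwards [hf.coeFn_toLp, hg.coeFn_toLp] with x hfx hgx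
    rw [hfx, hgx]

lemma MeasureTheory.AEStronglyMeasurable.integrable_inner_of_norm_le {f g : Ω → E} {K : ℝ}
    (hf : AEStronglyMeasurable f μ) (hfK : ∀ᵐ x ∂μ, ‖f x‖ ≤ K) (hg : Integrable g μ) :
    Integrable (fun x => ⟪f x, g x⟫) μ := by
  refine (hg.norm.const_mul K).mono' (hf.inner hg.aestronglyMeasurable) ?_
  filter_upwards [hfK] with x hx
  exact (norm_inner_le_norm _ _).trans (mul_le_mul_of_nonneg_right hx (norm_nonneg _))

lemma setIntegral_inner_eq_integral_inner_indicator {f g : Ω → E} {s : Set Ω}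
    (hs : MeasurableSet s) :
    ∫ x in s, ⟪f x, g x⟫ ∂μ = ∫ x, ⟪f x, s.indicator g x⟫ ∂μ := by
  rw [← integral_indicator hs]
  congr 1 with x
  by_cases hx : x ∈ s <;> simp [hx]

variable [IsFiniteMeasure μ] {K : ℝ≥0} {W : Ω → E} {Wseq : ℕ → Ω → E}

lemma tendsto_setIntegral_inner_of_weak {ξ : Ω → E} {ξseq : ℕ → Ω → E}
    (hξseq : ∀ n, AEStronglyMeasurable (ξseq n) μ)
    (hξ_bdd : ∀ n, ∀ᵐ x ∂μ, ‖ξseq n x‖ ≤ K)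
    (hξ_weak : ∀ Z : Ω → E, MemLp Z 2 μ →
      Tendsto (fun n => ∫ x, ⟪ξseq n x, Z x⟫ ∂μ) atTop (𝓝 (∫ x, ⟪ξ x, Z x⟫ ∂μ)))
    (hW : MemLp W 2 μ) (hWseq : ∀ n, Integrable (Wseq n) μ)
    (hW_L1 : Tendsto (fun n => ∫ x, ‖Wseq n x - W x‖ ∂μ) atTop (𝓝 0))
    (z : E) {s : Set Ω} (hs : MeasurableSet s) :
    Tendsto (fun n => ∫ x in s, ⟪ξseq n x, z - Wseq n x⟫ ∂μ) atTop
      (𝓝 (∫ x in s, ⟪ξ x, z - W x⟫ ∂μ)) := by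
  have hzW : MemLp (fun x => z - W x) 2 μ := (memLp_const z).sub hW
  have hdist : ∀ n, Integrable (fun x => ‖Wseq n x - W x‖) μ := fun n =>
    ((hWseq n).sub (hW.integrable one_le_two)).norm
  refine tendsto_setIntegral_of_norm_sub_le
    (fun n => (hξseq n).integrable_inner_of_norm_le (hξ_bdd n)
      ((integrable_const z).sub (hWseq n)))
    (fun n => (hξseq n).integrable_inner_of_norm_le (hξ_bdd n) (hzW.integrable one_le_two))
    (fun n => (hdist n).const_mul K) (fun n => ?_) ?_ ?_
  · filter_upwards [hξ_bdd n] with x hx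
    calc ‖⟪ξseq n x, z - Wseq n x⟫ - ⟪ξseq n x, z - W x⟫‖
        = ‖⟪ξseq n x, W x - Wseq n x⟫‖ := by rw [← inner_sub_right, sub_sub_sub_cancel_left]
      _ ≤ ‖ξseq n x‖ * ‖W x - Wseq n x‖ := norm_inner_le_norm _ _
      _ ≤ K * ‖Wseq n x - W x‖ := by rw [norm_sub_rev]; gcongr
  · simpa [integral_const_mul] using hW_L1.const_mul (K : ℝ)
  · simp_rw [setIntegral_inner_eq_integral_inner_indicator hs]
    exact hξ_weak _ (hzW.indicator hs)

lemma setIntegral_inner_le_of_mem_subdifferential {g : ℕ → E → ℝ} {g₀ : E → ℝ}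
    {η : ℕ → ℝ} {ξ : Ω → E} {ξseq : ℕ → Ω → E}
    (hg : ∀ n, LipschitzWith K (g n)) (hg₀ : LipschitzWith K g₀)
    (hη : ∀ n w, |g n w - g₀ w| ≤ η n) (hη0 : Tendsto η atTop (𝓝 0))
    (hW : MemLp W 2 μ) (hWseq : ∀ n, Integrable (Wseq n) μ)
    (hW_L1 : Tendsto (fun n => ∫ x, ‖Wseq n x - W x‖ ∂μ) atTop (𝓝 0))
    (hξseq : ∀ n, AEStronglyMeasurable (ξseq n) μ)
    (hξ_weak : ∀ Z : Ω → E, MemLp Z 2 μ →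
      Tendsto (fun n => ∫ x, ⟪ξseq n x, Z x⟫ ∂μ) atTop (𝓝 (∫ x, ⟪ξ x, Z x⟫ ∂μ)))
    (hξ_sub : ∀ n, ∀ᵐ x ∂μ, ξseq n x ∈ subdifferential (g n) (Wseq n x))
    (z : E) {s : Set Ω} (hs : MeasurableSet s) :
    ∫ x in s, ⟪ξ x, z - W x⟫ ∂μ ≤ ∫ x in s, (g₀ z - g₀ (W x)) ∂μ := by
  have hξ_bdd : ∀ n, ∀ᵐ x ∂μ, ‖ξseq n x‖ ≤ K := fun n =>
    (hξ_sub n).mono fun x hx => norm_le_of_mem_subdifferential (hg n) hx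
  have hsub_lip : ∀ {f : E → ℝ}, LipschitzWith K f → LipschitzWith K (fun w => f z - f w) :=
    fun hf => LipschitzWith.of_dist_le_mul fun a b => by
      simpa only [dist_sub_left] using hf.dist_le_mul a b
  refine le_of_tendsto_of_tendsto'
    (tendsto_setIntegral_inner_of_weak hξseq hξ_bdd hξ_weak hW hWseq hW_L1 z hs)
    (tendsto_setIntegral_comp_of_lipschitzWith (g := fun n w => g n z - g n w)
      (η := fun n => 2 * η n) (fun n => hsub_lip (hg n)) (hsub_lip hg₀) (fun n w => ?_)
      (by simpa using hη0.const_mul 2) (hW.integrable one_le_two) hWseq hW_L1 s) fun n => ?_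
  · calc |g n z - g n w - (g₀ z - g₀ w)| = |(g n z - g₀ z) - (g n w - g₀ w)| := by ring_nf
      _ ≤ |g n z - g₀ z| + |g n w - g₀ w| := abs_sub _ _
      _ ≤ 2 * η n := by linarith [hη n z, hη n w]
  · have hinner := (hξseq n).integrable_inner_of_norm_le (hξ_bdd n)
      ((integrable_const z).sub (hWseq n))
    exact setIntegral_mono_ae_restrict hinner.integrableOn
      ((hsub_lip (hg n)).integrable_comp (hWseq n)).integrableOn
      (ae_restrict_of_ae ((hξ_sub n).mono fun x hx => hx z))

theorem ae_mem_subdifferential_of_tendsto [TopologicalSpace.SeparableSpace E]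
    {g : ℕ → E → ℝ} {g₀ : E → ℝ} {η : ℕ → ℝ}
    {ξ : Ω → E} {ξseq : ℕ → Ω → E}
    (hg : ∀ n, LipschitzWith K (g n)) (hg₀ : LipschitzWith K g₀)
    (hη : ∀ n w, |g n w - g₀ w| ≤ η n) (hη0 : Tendsto η atTop (𝓝 0))
    (hW : MemLp W 2 μ) (hWseq : ∀ n, Integrable (Wseq n) μ)
    (hW_L1 : Tendsto (fun n => ∫ x, ‖Wseq n x - W x‖ ∂μ) atTop (𝓝 0))
    (hξ : MemLp ξ 2 μ) (hξseq : ∀ n, AEStronglyMeasurable (ξseq n) μ)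
    (hξ_weak : ∀ Z : Ω → E, MemLp Z 2 μ →
      Tendsto (fun n => ∫ x, ⟪ξseq n x, Z x⟫ ∂μ) atTop (𝓝 (∫ x, ⟪ξ x, Z x⟫ ∂μ)))
    (hξ_sub : ∀ n, ∀ᵐ x ∂μ, ξseq n x ∈ subdifferential (g n) (Wseq n x)) :
    ∀ᵐ x ∂μ, ξ x ∈ subdifferential g₀ (W x) := by
  refine ae_forall_le_of_forall_ae_le (by fun_prop)
    (fun x => hg₀.continuous.sub continuous_const) fun z =>
      ae_le_of_forall_setIntegral_le ?_ ?_ fun s hs _ =>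
        setIntegral_inner_le_of_mem_subdifferential hg hg₀ hη hη0 hW hWseq hW_L1 hξseq hξ_weak
          hξ_sub z hs
  · exact hξ.integrable_inner ((memLp_const z).sub hW)
  · exact (integrable_const _).sub (hg₀.integrable_comp (hW.integrable one_le_two))

end Subdifferential

theorem mollify_subdifferential_limit_general
    {d : ℕ}
    (ρ : EuclideanSpace ℝ (Fin d) → ℝ)
    (hρ_nonneg : ∀ x, 0 ≤ ρ x)
    (hρ_supp : Function.support ρ ⊆ Metric.closedBall 0 1)
    (hρ_int : ∫ x, ρ x = 1)
    (γ : EuclideanSpace ℝ (Fin d) → ℝ)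
    (L : ℝ) (hγ_lip : LipschitzWith (Real.toNNReal L) γ)
    {Ω : Type*} [MeasurableSpace Ω] (μ : Measure Ω) [IsFiniteMeasure μ]
    (εseq : ℕ → ℝ) (hεseq_nonneg : ∀ n, 0 ≤ εseq n)
    (hεseq_conv : Filter.Tendsto εseq Filter.atTop (nhds 0))
    (W : Ω → EuclideanSpace ℝ (Fin d)) (hW : MemLp W 2 μ)
    (Wseq : ℕ → Ω → EuclideanSpace ℝ (Fin d)) (hWseq : ∀ n, MemLp (Wseq n) 2 μ)
    (hW_strong : Filter.Tendsto (fun n => ∫ x, ‖Wseq n x - W x‖ ^ 2 ∂μ)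
      Filter.atTop (nhds 0))
    (ξ : Ω → EuclideanSpace ℝ (Fin d)) (hξ : MemLp ξ 2 μ)
    (ξseq : ℕ → Ω → EuclideanSpace ℝ (Fin d)) (hξseq : ∀ n, MemLp (ξseq n) 2 μ)
    (hξ_weak : ∀ Z : Ω → EuclideanSpace ℝ (Fin d), MemLp Z 2 μ →
      Filter.Tendsto (fun n => ∫ x, (inner ℝ (ξseq n x) (Z x) : ℝ) ∂μ) Filter.atTop
        (nhds (∫ x, (inner ℝ (ξ x) (Z x) : ℝ) ∂μ)))
    (hξ_sub : ∀ n, ∀ᵐ x ∂μ, ∀ z : EuclideanSpace ℝ (Fin d),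
      (inner ℝ (ξseq n x) (z - Wseq n x) : ℝ) ≤
        mollify ρ γ (εseq n) z - mollify ρ γ (εseq n) (Wseq n x)) :
    (∀ᵐ x ∂μ, ∀ z : EuclideanSpace ℝ (Fin d),
      (inner ℝ (ξ x) (z - W x) : ℝ) ≤ γ z - γ (W x)) ∧
    Filter.Tendsto (fun n => ∫ x, mollify ρ γ (εseq n) (Wseq n x) ∂μ) Filter.atTop
      (nhds (∫ x, γ (W x) ∂μ)) := by
  have hmol_lip : ∀ n, LipschitzWith (Real.toNNReal L) (mollify ρ γ (εseq n)) := fun n =>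
    hγ_lip.mollify hρ_nonneg hρ_int hρ_supp (hεseq_nonneg n)
  have hmol_approx : ∀ n w, |mollify ρ γ (εseq n) w - γ w| ≤ Real.toNNReal L * εseq n :=
    fun n => abs_mollify_sub_le hρ_nonneg hρ_int hρ_supp hγ_lip (hεseq_nonneg n)
  have hη0 : Tendsto (fun n => (Real.toNNReal L : ℝ) * εseq n) atTop (𝓝 0) := by
    simpa using hεseq_conv.const_mul (Real.toNNReal L : ℝ)
  have hWseq_int : ∀ n, Integrable (Wseq n) μ := fun n => (hWseq n).integrable one_le_two
  have hW_L1 : Tendsto (fun n => ∫ x, ‖Wseq n x - W x‖ ∂μ) atTop (𝓝 0) :=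
    tendsto_integral_norm_of_tendsto_integral_norm_sq (fun n => (hWseq n).sub hW) hW_strong
  refine ⟨ae_mem_subdifferential_of_tendsto hmol_lip hγ_lip hmol_approx hη0 hW hWseq_int hW_L1
    hξ (fun n => (hξseq n).aestronglyMeasurable) hξ_weak hξ_sub, ?_⟩
  simpa using tendsto_setIntegral_comp_of_lipschitzWith hmol_lip hγ_lip hmol_approx hη0
    (hW.integrable one_le_two) hWseq_int hW_L1 Set.univ

/-- If `εₙ → 0`, `Wₙ → W` strongly in `L²(μ; ℝ^d)`, `ξₙ ⇀ ξ` weakly in `L²(μ; ℝ^d)`, and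
`ξₙ(x) ∈ ∂γ_{εₙ}(Wₙ(x))` a.e. for each `n`, then `ξ(x) ∈ ∂γ(W(x))` a.e. and moreover
`∫_Ω γ_{εₙ}(Wₙ) dμ → ∫_Ω γ(W) dμ`. -/
theorem mollify_subdifferential_limit
    {d : ℕ} (hd : 1 ≤ d)
    (ρ : EuclideanSpace ℝ (Fin d) → ℝ)
    (hρ_smooth : ContDiff ℝ (⊤ : ℕ∞) ρ) (hρ_cpt : HasCompactSupport ρ)
    (hρ_nonneg : ∀ x, 0 ≤ ρ x)
    (hρ_supp : Function.support ρ ⊆ Metric.closedBall 0 1)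
    (hρ_int : ∫ x, ρ x = 1)
    (γ : EuclideanSpace ℝ (Fin d) → ℝ)
    (hγ_nonneg : ∀ x, 0 ≤ γ x)
    (hγ_convex : ConvexOn ℝ Set.univ γ)
    (L : ℝ) (hL : 0 ≤ L) (hγ_lip : LipschitzWith (Real.toNNReal L) γ)
    {Ω : Type*} [MeasurableSpace Ω] (μ : Measure Ω) [IsFiniteMeasure μ]
    (εseq : ℕ → ℝ) (hεseq_nonneg : ∀ n, 0 ≤ εseq n)
    (hεseq_conv : Filter.Tendsto εseq Filter.atTop (nhds 0))
    (W : Ω → EuclideanSpace ℝ (Fin d)) (hW : MemLp W 2 μ)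
    (Wseq : ℕ → Ω → EuclideanSpace ℝ (Fin d)) (hWseq : ∀ n, MemLp (Wseq n) 2 μ)
    (hW_strong : Filter.Tendsto (fun n => ∫ x, ‖Wseq n x - W x‖ ^ 2 ∂μ)
      Filter.atTop (nhds 0))
    (ξ : Ω → EuclideanSpace ℝ (Fin d)) (hξ : MemLp ξ 2 μ)
    (ξseq : ℕ → Ω → EuclideanSpace ℝ (Fin d)) (hξseq : ∀ n, MemLp (ξseq n) 2 μ)
    (hξ_weak : ∀ Z : Ω → EuclideanSpace ℝ (Fin d), MemLp Z 2 μ →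
      Filter.Tendsto (fun n => ∫ x, (inner ℝ (ξseq n x) (Z x) : ℝ) ∂μ) Filter.atTop
        (nhds (∫ x, (inner ℝ (ξ x) (Z x) : ℝ) ∂μ)))
    (hξ_sub : ∀ n, ∀ᵐ x ∂μ, ∀ z : EuclideanSpace ℝ (Fin d),
      (inner ℝ (ξseq n x) (z - Wseq n x) : ℝ) ≤
        mollify ρ γ (εseq n) z - mollify ρ γ (εseq n) (Wseq n x)) :
    (∀ᵐ x ∂μ, ∀ z : EuclideanSpace ℝ (Fin d),
      (inner ℝ (ξ x) (z - W x) : ℝ) ≤ γ z - γ (W x)) ∧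
    Filter.Tendsto (fun n => ∫ x, mollify ρ γ (εseq n) (Wseq n x) ∂μ) Filter.atTop
      (nhds (∫ x, γ (W x) ∂μ)) :=
  mollify_subdifferential_limit_general ρ hρ_nonneg hρ_supp hρ_int γ L hγ_lip μ εseq hεseq_nonneg
    hεseq_conv W hW Wseq hWseq hW_strong ξ hξ ξseq hξseq hξ_weak hξ_sub
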